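/- Suppose the orthogonal matrix decomposition T = P_V P_U + P_{V^⊥} P_{U^⊥} holds with U ∩ V = {0}, U = N(A), V = N(B). If the iterates y^k of the Douglas–Rachford iteration eventually satisfy R(y^k) ∈ Q for all k ≥ K and P_{R(A^T) ∩ R(B^T)}(y^K - y*) = 0, then ||y^k - y*|| ≤ (cos θ_1)^{k-K} ||y^K - y*|| for all k > K, where θ_1 is the first principal angle between N(A) and N(B). -/

import Mathlib

/-!
With `U = N(A)` and `V = N(B)`, the error matrix acts as `T = P_V P_U + P_{Vᗮ} P_{Uᗮ}`.
For `z ∈ Uᗮ ⊓ Vᗮ` one has `⟪z, T w⟫ = ⟪z, w⟫`, so `T` preserves `W = (Uᗮ ⊓ Vᗮ)ᗮ`, and it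
suffices to show `‖T w‖ ≤ cos θ₁ ‖w‖` on `W`. The two summands of `T w` are orthogonal, and
`‖P_V a‖ ≤ cos θ₁ ‖a‖` for `a = P_U w ∈ U` by the definition of `θ₁`. For `b = P_{Uᗮ} w ∈ Uᗮ ⊓ W`,
write `b = P_{Uᗮ} v` with `v ∈ V` (possible for every vector of `Uᗮ ⊓ W`); then
`‖b‖² = ⟪P_V b, v⟫ ≤ ‖P_V b‖ ‖v‖` and `‖v‖² = ‖P_U v‖² + ‖b‖² ≤ cos² θ₁ ‖v‖² + ‖b‖²` bound
`‖P_V b‖` from below, which gives `‖P_{Vᗮ} b‖ ≤ cos θ₁ ‖b‖`.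
-/

open Finset Matrix

/-- The error-propagation matrix `T = (I - B⁺B)(I - A⁺A) + B⁺B A⁺A` for
Douglas-Rachford on basis pursuit, where `B⁺B` is the diagonal projection onto
the coordinates where `x* = 0` and `A⁺A = Aᵀ(AAᵀ)⁻¹A`. -/
noncomputable def errMat {m n : ℕ} (A : Matrix (Fin m) (Fin n) ℝ) (xs : Fin n → ℝ) :
    Matrix (Fin n) (Fin n) ℝ :=
  ((1 : Matrix (Fin n) (Fin n) ℝ)
      - Matrix.diagonal (fun j => if xs j = 0 then (1 : ℝ) else 0))
    * ((1 : Matrix (Fin n) (Fin n) ℝ) - (Aᵀ * (A * Aᵀ)⁻¹) * A)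
  + Matrix.diagonal (fun j => if xs j = 0 then (1 : ℝ) else 0)
    * ((Aᵀ * (A * Aᵀ)⁻¹) * A)

open RealInnerProductSpace WithLp

theorem norm_iterate_le_of_mapsTo {E : Type*} [SeminormedAddCommGroup E] {f : E → E}
    {s : Set E} {c : ℝ} (hc : 0 ≤ c) (hs : Set.MapsTo f s s) (hf : ∀ x ∈ s, ‖f x‖ ≤ c * ‖x‖)
    {x : E} (hx : x ∈ s) (k : ℕ) : ‖f^[k] x‖ ≤ c ^ k * ‖x‖ := by
  induction k with
  | zero => simp
  | succ k ih =>
    rw [Function.iterate_succ_apply', pow_succ', mul_assoc]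
    exact (hf _ (hs.iterate k hx)).trans (mul_le_mul_of_nonneg_left ih hc)

theorem EuclideanSpace.real_inner_eq_sum_mul {ι : Type*} [Fintype ι] (x y : EuclideanSpace ℝ ι) :
    ⟪x, y⟫ = ∑ i, x i * y i := by
  simp [EuclideanSpace.inner_eq_star_dotProduct, dotProduct, mul_comm]

theorem Matrix.isUnit_of_rank_eq_card {κ K : Type*} [Fintype κ] [DecidableEq κ] [Field K]
    {M : Matrix κ κ K} (h : M.rank = Fintype.card κ) : IsUnit M := by
  rw [← mulVec_surjective_iff_isUnit, ← coe_mulVecLin, ← LinearMap.range_eq_top]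
  apply Submodule.eq_top_of_finrank_eq
  rw [← Matrix.rank, h, Module.finrank_fintype_fun_eq_card]

section Projections

variable {E : Type*} [NormedAddCommGroup E] [InnerProductSpace ℝ E]

theorem inner_starProjection_self_eq_norm_sq (K : Submodule ℝ E) [K.HasOrthogonalProjection]
    (x : E) : ⟪K.starProjection x, x⟫ = ‖K.starProjection x‖ ^ 2 := by
  simpa using K.re_inner_starProjection_eq_normSq x

theorem norm_starProjection_le_of_inner_le {U V : Submodule ℝ E} [V.HasOrthogonalProjection]
    {c : ℝ} (hc : 0 ≤ c) (hUV : ∀ u ∈ U, ∀ v ∈ V, ⟪u, v⟫ ≤ c * (‖u‖ * ‖v‖))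
    {u : E} (hu : u ∈ U) : ‖V.starProjection u‖ ≤ c * ‖u‖ := by
  have hp : ‖V.starProjection u‖ ^ 2 ≤ c * (‖u‖ * ‖V.starProjection u‖) := by
    rw [← inner_starProjection_self_eq_norm_sq, real_inner_comm]
    exact hUV u hu _ (V.starProjection_apply_mem u)
  nlinarith [norm_nonneg (V.starProjection u), mul_nonneg hc (norm_nonneg u)]

theorem map_starProjection_orthogonal [FiniteDimensional ℝ E] (U V : Submodule ℝ E) :
    V.map (Uᗮ.starProjection : E →ₗ[ℝ] E) = Uᗮ ⊓ (Uᗮ ⊓ Vᗮ)ᗮ := by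
  set R := V.map (Uᗮ.starProjection : E →ₗ[ℝ] E)
  have hR : R ≤ Uᗮ ⊓ (Uᗮ ⊓ Vᗮ)ᗮ := by
    rintro _ ⟨v, hv, rfl⟩
    refine ⟨Uᗮ.starProjection_apply_mem v, fun z hz => ?_⟩
    rw [ContinuousLinearMap.coe_coe, ← Uᗮ.inner_starProjection_left_eq_right,
      Uᗮ.starProjection_eq_self_iff.2 hz.1]
    exact Submodule.inner_left_of_mem_orthogonal hv hz.2
  have hperp : Rᗮ ⊓ (Uᗮ ⊓ (Uᗮ ⊓ Vᗮ)ᗮ) = ⊥ := by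
    refine eq_bot_mono ?_ (Uᗮ ⊓ Vᗮ).inf_orthogonal_eq_bot
    rintro x ⟨hxR, hxU, hxW⟩
    refine ⟨⟨hxU, fun v hv => ?_⟩, hxW⟩
    rw [← Uᗮ.starProjection_eq_self_iff.2 hxU, ← Uᗮ.inner_starProjection_left_eq_right]
    exact hxR _ ⟨v, hv, rfl⟩
  simpa [hperp] using Submodule.sup_orthogonal_inf_of_hasOrthogonalProjection hR

theorem norm_starProjection_orthogonal_le [FiniteDimensional ℝ E] {U V : Submodule ℝ E}
    {c : ℝ} (hc : 0 ≤ c) (hUV : ∀ u ∈ U, ∀ v ∈ V, ⟪u, v⟫ ≤ c * (‖u‖ * ‖v‖))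
    {b : E} (hb : b ∈ Uᗮ ⊓ (Uᗮ ⊓ Vᗮ)ᗮ) : ‖Vᗮ.starProjection b‖ ≤ c * ‖b‖ := by
  rw [← map_starProjection_orthogonal] at hb
  obtain ⟨v, hv, rfl⟩ := hb
  rw [ContinuousLinearMap.coe_coe]
  set b := Uᗮ.starProjection v
  set q := V.starProjection b
  set r := Vᗮ.starProjection b
  have hVU : ∀ v ∈ V, ∀ u ∈ U, ⟪v, u⟫ ≤ c * (‖v‖ * ‖u‖) := fun v hv u hu => by
    rw [real_inner_comm, mul_comm ‖v‖]
    exact hUV u hu v hv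
  have ha : ‖U.starProjection v‖ ≤ c * ‖v‖ := norm_starProjection_le_of_inner_le hc hVU hv
  have hv2 : ‖v‖ ^ 2 = ‖U.starProjection v‖ ^ 2 + ‖b‖ ^ 2 :=
    U.norm_sq_eq_add_norm_sq_starProjection v
  have hb2 : ‖b‖ ^ 2 = ‖q‖ ^ 2 + ‖r‖ ^ 2 := V.norm_sq_eq_add_norm_sq_starProjection b
  have hbq : ‖b‖ ^ 2 ≤ ‖q‖ * ‖v‖ := by
    calc ‖b‖ ^ 2 = ⟪b, v⟫ := by rw [← inner_starProjection_self_eq_norm_sq]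
      _ = ⟪q, v⟫ := by
        rw [V.inner_starProjection_left_eq_right, V.starProjection_eq_self_iff.2 hv]
      _ ≤ ‖q‖ * ‖v‖ := real_inner_le_norm q v
  have key : ‖r‖ ^ 2 * ‖v‖ ^ 2 ≤ (c * ‖b‖) ^ 2 * ‖v‖ ^ 2 := by
    calc ‖r‖ ^ 2 * ‖v‖ ^ 2 = ‖b‖ ^ 2 * ‖v‖ ^ 2 - ‖q‖ ^ 2 * ‖v‖ ^ 2 := by rw [hb2]; ring
      _ ≤ ‖b‖ ^ 2 * ‖v‖ ^ 2 - (‖b‖ ^ 2) ^ 2 := by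
        have := pow_le_pow_left₀ (by positivity) hbq 2
        rw [mul_pow] at this
        linarith
      _ = ‖b‖ ^ 2 * ‖U.starProjection v‖ ^ 2 := by rw [hv2]; ring
      _ ≤ ‖b‖ ^ 2 * (c * ‖v‖) ^ 2 := by gcongr
      _ = (c * ‖b‖) ^ 2 * ‖v‖ ^ 2 := by ring
  rcases (norm_nonneg v).eq_or_lt with hv0 | hv0
  · simp [b, r, norm_eq_zero.1 hv0.symm]
  · exact (pow_le_pow_iff_left₀ (norm_nonneg r) (by positivity) two_ne_zero).1
      (le_of_mul_le_mul_right key (by positivity))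

/-- Its supremum is `cos θ₁`, the cosine of the first principal angle between `U` and `V`. -/
def cosineSet (U V : Submodule ℝ E) : Set ℝ :=
  {t | ∃ u ∈ U, ∃ v ∈ V, ‖u‖ = 1 ∧ ‖v‖ = 1 ∧ ⟪u, v⟫ = t}

theorem nonneg_of_isGreatest_cosineSet {U V : Submodule ℝ E} {c : ℝ}
    (hc : IsGreatest (cosineSet U V) c) : 0 ≤ c := by
  obtain ⟨u, hu, v, hv, hu1, hv1, rfl⟩ := hc.1
  have : -⟪u, v⟫ ≤ ⟪u, v⟫ :=
    hc.2 ⟨u, hu, -v, V.neg_mem hv, hu1, by rwa [norm_neg], inner_neg_right u v⟩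
  linarith

theorem inner_le_of_mem_upperBounds_cosineSet {U V : Submodule ℝ E} {c : ℝ}
    (hc : c ∈ upperBounds (cosineSet U V)) : ∀ u ∈ U, ∀ v ∈ V, ⟪u, v⟫ ≤ c * (‖u‖ * ‖v‖) := by
  intro u hu v hv
  rcases eq_or_ne u 0 with rfl | hu0
  · simp
  rcases eq_or_ne v 0 with rfl | hv0
  · simp
  have h := hc ⟨_, U.smul_mem ‖u‖⁻¹ hu, _, V.smul_mem ‖v‖⁻¹ hv,
    norm_smul_inv_norm hu0, norm_smul_inv_norm hv0, rfl⟩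
  rw [real_inner_smul_left, real_inner_smul_right, ← mul_assoc, ← mul_inv,
    inv_mul_le_iff₀ (by positivity)] at h
  linarith

noncomputable def douglasRachford (U V : Submodule ℝ E) [U.HasOrthogonalProjection]
    [V.HasOrthogonalProjection] : E →L[ℝ] E :=
  V.starProjection ∘L U.starProjection + Vᗮ.starProjection ∘L Uᗮ.starProjection

variable {U V : Submodule ℝ E} [U.HasOrthogonalProjection] [V.HasOrthogonalProjection]

theorem inner_douglasRachford_of_mem {z : E} (hz : z ∈ Uᗮ ⊓ Vᗮ) (w : E) :
    ⟪z, douglasRachford U V w⟫ = ⟪z, w⟫ := by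
  have hPV : ⟪z, V.starProjection (U.starProjection w)⟫ = 0 :=
    Submodule.inner_left_of_mem_orthogonal (V.starProjection_apply_mem _) hz.2
  rw [douglasRachford, _root_.add_apply, ContinuousLinearMap.comp_apply,
    ContinuousLinearMap.comp_apply, inner_add_right, hPV, zero_add,
    ← Vᗮ.inner_starProjection_left_eq_right, Vᗮ.starProjection_eq_self_iff.2 hz.2,
    ← Uᗮ.inner_starProjection_left_eq_right, Uᗮ.starProjection_eq_self_iff.2 hz.1]

theorem douglasRachford_mem_orthogonal {w : E} (hw : w ∈ (Uᗮ ⊓ Vᗮ)ᗮ) :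
    douglasRachford U V w ∈ (Uᗮ ⊓ Vᗮ)ᗮ := fun z hz => by
  rw [inner_douglasRachford_of_mem hz]
  exact hw z hz

theorem norm_douglasRachford_le [FiniteDimensional ℝ E] {c : ℝ} (hc : 0 ≤ c)
    (hUV : ∀ u ∈ U, ∀ v ∈ V, ⟪u, v⟫ ≤ c * (‖u‖ * ‖v‖)) {w : E} (hw : w ∈ (Uᗮ ⊓ Vᗮ)ᗮ) :
    ‖douglasRachford U V w‖ ≤ c * ‖w‖ := by
  set a := U.starProjection w
  set b := Uᗮ.starProjection w
  have hbW : b ∈ (Uᗮ ⊓ Vᗮ)ᗮ := fun z hz => by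
    rw [← Uᗮ.inner_starProjection_left_eq_right, Uᗮ.starProjection_eq_self_iff.2 hz.1]
    exact hw z hz
  have hp := norm_starProjection_le_of_inner_le hc hUV (U.starProjection_apply_mem w)
  have hq := norm_starProjection_orthogonal_le hc hUV ⟨Uᗮ.starProjection_apply_mem w, hbW⟩
  have horth : ⟪V.starProjection a, Vᗮ.starProjection b⟫ = 0 :=
    Submodule.inner_right_of_mem_orthogonal (V.starProjection_apply_mem a)
      (Vᗮ.starProjection_apply_mem b)
  have hsq : ‖douglasRachford U V w‖ ^ 2 ≤ (c * ‖w‖) ^ 2 := by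
    calc ‖douglasRachford U V w‖ ^ 2
        = ‖V.starProjection a‖ ^ 2 + ‖Vᗮ.starProjection b‖ ^ 2 := by
          simp only [sq]
          exact norm_add_sq_eq_norm_sq_add_norm_sq_real horth
      _ ≤ (c * ‖a‖) ^ 2 + (c * ‖b‖) ^ 2 := by gcongr
      _ = (c * ‖w‖) ^ 2 := by
        rw [mul_pow c ‖w‖, U.norm_sq_eq_add_norm_sq_starProjection w]; ring
  exact (pow_le_pow_iff_left₀ (norm_nonneg _) (by positivity) two_ne_zero).1 hsq

end Projections

section SymmetricIdempotent

variable {ι : Type*} [Fintype ι] [DecidableEq ι] {P : Matrix ι ι ℝ}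

theorem starProjection_ker_toEuclideanLin (hP : P.IsHermitian) (hP' : IsIdempotentElem P)
    (x : EuclideanSpace ℝ ι) :
    (LinearMap.ker (toEuclideanLin P)).starProjection x = x - toEuclideanLin P x := by
  refine Submodule.eq_starProjection_of_mem_orthogonal ?_ ?_
  · rw [LinearMap.mem_ker, map_sub, ← LinearMap.comp_apply, ← toLpLin_mul_same, hP'.eq,
      sub_self]
  · intro u hu
    rw [sub_sub_cancel, ← isSymmetric_toEuclideanLin_iff.2 hP, LinearMap.mem_ker.1 hu,
      inner_zero_left]

theorem starProjection_orthogonal_ker_toEuclideanLin (hP : P.IsHermitian)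
    (hP' : IsIdempotentElem P) (x : EuclideanSpace ℝ ι) :
    (LinearMap.ker (toEuclideanLin P))ᗮ.starProjection x = toEuclideanLin P x := by
  rw [Submodule.starProjection_orthogonal_val, starProjection_ker_toEuclideanLin hP hP',
    sub_sub_cancel]

theorem mulVec_eq_self_of_mem_orthogonal_ker (hP : P.IsHermitian) (hP' : IsIdempotentElem P)
    {z : EuclideanSpace ℝ ι} (hz : z ∈ (LinearMap.ker (toEuclideanLin P))ᗮ) :
    P *ᵥ ofLp z = ofLp z := by
  calc P *ᵥ ofLp z = ofLp (toEuclideanLin P z) := rfl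
    _ = ofLp z := by
      rw [← starProjection_orthogonal_ker_toEuclideanLin hP hP',
        Submodule.starProjection_eq_self_iff.2 hz]

theorem toEuclideanLin_one_sub_mul_one_sub_add_mul {Q : Matrix ι ι ℝ} (hP : P.IsHermitian)
    (hP' : IsIdempotentElem P) (hQ : Q.IsHermitian) (hQ' : IsIdempotentElem Q)
    (x : EuclideanSpace ℝ ι) :
    toEuclideanLin ((1 - P) * (1 - Q) + P * Q) x =
      douglasRachford (LinearMap.ker (toEuclideanLin Q)) (LinearMap.ker (toEuclideanLin P)) x := by
  rw [douglasRachford, _root_.add_apply, ContinuousLinearMap.comp_apply,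
    ContinuousLinearMap.comp_apply, starProjection_ker_toEuclideanLin hQ hQ',
    starProjection_ker_toEuclideanLin hP hP', starProjection_orthogonal_ker_toEuclideanLin hQ hQ',
    starProjection_orthogonal_ker_toEuclideanLin hP hP']
  simp only [map_add, map_sub, toLpLin_mul_same, toLpLin_one, LinearMap.add_apply,
    LinearMap.sub_apply, LinearMap.comp_apply, LinearMap.id_apply]
  abel

end SymmetricIdempotent

section RowSpaceProjection

variable {ι κ : Type*} [Fintype ι] [Fintype κ] [DecidableEq κ]

noncomputable def rowSpaceProjection (A : Matrix κ ι ℝ) : Matrix ι ι ℝ := Aᵀ * (A * Aᵀ)⁻¹ * A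

theorem isHermitian_rowSpaceProjection (A : Matrix κ ι ℝ) :
    (rowSpaceProjection A).IsHermitian := by
  simpa [rowSpaceProjection, conjTranspose_eq_transpose_of_trivial] using
    isHermitian_conjTranspose_mul_mul A (isHermitian_mul_conjTranspose_self A).inv

theorem mul_rowSpaceProjection {A : Matrix κ ι ℝ} (hA : IsUnit (A * Aᵀ)) :
    A * rowSpaceProjection A = A := by
  rw [rowSpaceProjection, ← Matrix.mul_assoc, ← Matrix.mul_assoc,
    mul_nonsing_inv _ ((isUnit_iff_isUnit_det _).1 hA), Matrix.one_mul]

theorem isIdempotentElem_rowSpaceProjection {A : Matrix κ ι ℝ} (hA : IsUnit (A * Aᵀ)) :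
    IsIdempotentElem (rowSpaceProjection A) := by
  nth_rewrite 1 [IsIdempotentElem, rowSpaceProjection]
  rw [Matrix.mul_assoc, mul_rowSpaceProjection hA, rowSpaceProjection]

variable [DecidableEq ι]

theorem mem_ker_rowSpaceProjection {A : Matrix κ ι ℝ} (hA : IsUnit (A * Aᵀ))
    {x : EuclideanSpace ℝ ι} :
    x ∈ LinearMap.ker (toEuclideanLin (rowSpaceProjection A)) ↔ A *ᵥ ofLp x = 0 := by
  rw [LinearMap.mem_ker, toLpLin_apply, WithLp.toLp_eq_zero]
  constructor
  · intro h
    rw [← mul_rowSpaceProjection hA, ← mulVec_mulVec, h, mulVec_zero]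
  · intro h
    rw [rowSpaceProjection, ← mulVec_mulVec, h, mulVec_zero]

theorem exists_eq_transpose_mulVec_of_mem_orthogonal {A : Matrix κ ι ℝ} (hA : IsUnit (A * Aᵀ))
    {z : EuclideanSpace ℝ ι}
    (hz : z ∈ (LinearMap.ker (toEuclideanLin (rowSpaceProjection A)))ᗮ) :
    ∃ w, ofLp z = Aᵀ *ᵥ w :=
  ⟨((A * Aᵀ)⁻¹ * A) *ᵥ ofLp z, by
    nth_rewrite 1 [← mulVec_eq_self_of_mem_orthogonal_ker (isHermitian_rowSpaceProjection A)
      (isIdempotentElem_rowSpaceProjection hA) hz]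
    rw [mulVec_mulVec, rowSpaceProjection, Matrix.mul_assoc]⟩

end RowSpaceProjection

section ZeroCoordProjection

variable {ι : Type*} [DecidableEq ι]

noncomputable def zeroCoordProjection (xs : ι → ℝ) : Matrix ι ι ℝ :=
  diagonal fun j => if xs j = 0 then 1 else 0

theorem isHermitian_zeroCoordProjection (xs : ι → ℝ) : (zeroCoordProjection xs).IsHermitian :=
  isHermitian_diagonal _

variable [Fintype ι]

theorem isIdempotentElem_zeroCoordProjection (xs : ι → ℝ) :
    IsIdempotentElem (zeroCoordProjection xs) := by
  simp [IsIdempotentElem, zeroCoordProjection, diagonal_mul_diagonal]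

theorem zeroCoordProjection_mulVec_apply (xs v : ι → ℝ) (i : ι) :
    (zeroCoordProjection xs *ᵥ v) i = if xs i = 0 then v i else 0 := by
  simp [zeroCoordProjection, mulVec_diagonal]

theorem mem_ker_zeroCoordProjection {xs : ι → ℝ} {x : EuclideanSpace ℝ ι} :
    x ∈ LinearMap.ker (toEuclideanLin (zeroCoordProjection xs)) ↔ ∀ i, xs i = 0 → x i = 0 := by
  simp [LinearMap.mem_ker, toLpLin_apply, funext_iff, zeroCoordProjection_mulVec_apply]

theorem apply_eq_zero_of_mem_orthogonal_ker_zeroCoordProjection {xs : ι → ℝ}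
    {z : EuclideanSpace ℝ ι}
    (hz : z ∈ (LinearMap.ker (toEuclideanLin (zeroCoordProjection xs)))ᗮ)
    {i : ι} (hi : xs i ≠ 0) : z i = 0 := by
  rw [← mulVec_eq_self_of_mem_orthogonal_ker (isHermitian_zeroCoordProjection xs)
    (isIdempotentElem_zeroCoordProjection xs) hz, zeroCoordProjection_mulVec_apply, if_neg hi]

end ZeroCoordProjection

theorem cosineSet_ker_eq {ι κ : Type*} [Fintype ι] [DecidableEq ι] [Fintype κ] [DecidableEq κ]
    {A : Matrix κ ι ℝ} (hA : IsUnit (A * Aᵀ)) (xs : ι → ℝ) :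
    cosineSet (LinearMap.ker (toEuclideanLin (rowSpaceProjection A)))
        (LinearMap.ker (toEuclideanLin (zeroCoordProjection xs))) =
      {t | ∃ u v : ι → ℝ, A *ᵥ u = 0 ∧ (∀ i, xs i = 0 → v i = 0) ∧ (∑ i, u i ^ 2) = 1 ∧
        (∑ i, v i ^ 2) = 1 ∧ t = ∑ i, u i * v i} := by
  have hnorm (x : EuclideanSpace ℝ ι) : ‖x‖ = 1 ↔ ∑ i, x i ^ 2 = 1 := by
    rw [← EuclideanSpace.real_norm_sq_eq, pow_eq_one_iff_of_nonneg (norm_nonneg x) two_ne_zero]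
  ext t
  simp only [cosineSet, Set.mem_ofPred_eq, mem_ker_rowSpaceProjection hA,
    mem_ker_zeroCoordProjection, hnorm, EuclideanSpace.real_inner_eq_sum_mul]
  constructor
  · rintro ⟨u, hu, v, hv, hu1, hv1, rfl⟩
    exact ⟨ofLp u, ofLp v, hu, hv, hu1, hv1, rfl⟩
  · rintro ⟨u, v, hu, hv, hu1, hv1, rfl⟩
    exact ⟨toLp 2 u, hu, toLp 2 v, hv, hu1, hv1, rfl⟩

theorem toLp_mem_orthogonal_inf_orthogonal {ι κ : Type*} [Fintype ι] [DecidableEq ι]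
    [Fintype κ] [DecidableEq κ] {A : Matrix κ ι ℝ} (hA : IsUnit (A * Aᵀ)) {xs w : ι → ℝ}
    (hw : ∀ v : ι → ℝ, (∃ z, v = Aᵀ *ᵥ z) → (∀ i, xs i ≠ 0 → v i = 0) → ∑ i, w i * v i = 0) :
    toLp 2 w ∈ ((LinearMap.ker (toEuclideanLin (rowSpaceProjection A)))ᗮ ⊓
      (LinearMap.ker (toEuclideanLin (zeroCoordProjection xs)))ᗮ)ᗮ := by
  rintro z ⟨hzU, hzV⟩
  have := hw (ofLp z) (exists_eq_transpose_mulVec_of_mem_orthogonal hA hzU)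
    fun i hi => apply_eq_zero_of_mem_orthogonal_ker_zeroCoordProjection hzV hi
  simpa [EuclideanSpace.real_inner_eq_sum_mul, mul_comm] using this

theorem toEuclideanLin_errMat {m n : ℕ} {A : Matrix (Fin m) (Fin n) ℝ} (hA : IsUnit (A * Aᵀ))
    (xs : Fin n → ℝ) (x : EuclideanSpace ℝ (Fin n)) :
    toEuclideanLin (errMat A xs) x =
      douglasRachford (LinearMap.ker (toEuclideanLin (rowSpaceProjection A)))
        (LinearMap.ker (toEuclideanLin (zeroCoordProjection xs))) x :=
  toEuclideanLin_one_sub_mul_one_sub_add_mul (isHermitian_zeroCoordProjection xs)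
    (isIdempotentElem_zeroCoordProjection xs) (isHermitian_rowSpaceProjection A)
    (isIdempotentElem_rowSpaceProjection hA) x

theorem stmt10_general {m n : ℕ} (A : Matrix (Fin m) (Fin n) ℝ) (hrank : A.rank = m)
    (xs : Fin n → ℝ)
    (c : ℝ)
    (hc : IsGreatest {t : ℝ | ∃ u v : Fin n → ℝ, A.mulVec u = 0 ∧
      (∀ i, xs i = 0 → v i = 0) ∧ (∑ i, u i ^ 2) = 1 ∧ (∑ i, v i ^ 2) = 1 ∧
      t = ∑ i, u i * v i} c)
    (y : ℕ → Fin n → ℝ) (ys : Fin n → ℝ) (K : ℕ)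
    (hiter : ∀ k, K ≤ k → y (k+1) - ys = (errMat A xs).mulVec (y k - ys))
    (hproj : ∀ v : Fin n → ℝ, (∃ z : Fin m → ℝ, v = Aᵀ.mulVec z) →
      (∀ i, xs i ≠ 0 → v i = 0) → (∑ i, (y K i - ys i) * v i) = 0) :
    ∀ k, K < k →
      Real.sqrt (∑ i, (y k i - ys i) ^ 2)
        ≤ c ^ (k - K) * Real.sqrt (∑ i, (y K i - ys i) ^ 2) := by
  have hA : IsUnit (A * Aᵀ) :=
    isUnit_of_rank_eq_card (by rw [rank_self_mul_transpose, hrank, Fintype.card_fin])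
  set U := LinearMap.ker (toEuclideanLin (rowSpaceProjection A))
  set V := LinearMap.ker (toEuclideanLin (zeroCoordProjection xs))
  rw [← cosineSet_ker_eq hA] at hc
  have hc0 : 0 ≤ c := nonneg_of_isGreatest_cosineSet hc
  set e : ℕ → EuclideanSpace ℝ (Fin n) := fun k => toLp 2 (y k - ys)
  have he (j : ℕ) : e (K + j) = (douglasRachford U V)^[j] (e K) := by
    induction j with
    | zero => rfl
    | succ j ih =>
      rw [Function.iterate_succ_apply', ← ih, ← toEuclideanLin_errMat hA]
      exact congrArg (toLp 2) (hiter (K + j) (Nat.le_add_right K j))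
  have hnorm (k : ℕ) : √(∑ i, (y k i - ys i) ^ 2) = ‖e k‖ := by
    simp [e, EuclideanSpace.norm_eq]
  intro k hk
  obtain ⟨j, rfl⟩ := Nat.exists_eq_add_of_le hk.le
  rw [hnorm, hnorm, Nat.add_sub_cancel_left, he]
  exact norm_iterate_le_of_mapsTo hc0 (fun w hw => douglasRachford_mem_orthogonal hw)
    (fun w hw => norm_douglasRachford_le hc0 (inner_le_of_mem_upperBounds_cosineSet hc.2) hw)
    (toLp_mem_orthogonal_inf_orthogonal hA hproj) j

/-- If eventually the Douglas–Rachford error propagates linearly via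
`y^{k+1} - y* = T(y^k - y*)` and `y^K - y*` is orthogonal to `R(Aᵀ) ∩ R(Bᵀ)`,
then `‖y^k - y*‖ ≤ (cos θ₁)^{k-K} ‖y^K - y*‖` for all `k > K`, where `θ₁` is the
first principal angle between `N(A)` and `N(B)`. -/
theorem stmt10 {m n : ℕ} (A : Matrix (Fin m) (Fin n) ℝ) (hrank : A.rank = m)
    (xs : Fin n → ℝ)
    (htriv : ∀ z : Fin n → ℝ, A.mulVec z = 0 → (∀ i, xs i = 0 → z i = 0) → z = 0)
    (c : ℝ)
    (hc : IsGreatest {t : ℝ | ∃ u v : Fin n → ℝ, A.mulVec u = 0 ∧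
      (∀ i, xs i = 0 → v i = 0) ∧ (∑ i, u i ^ 2) = 1 ∧ (∑ i, v i ^ 2) = 1 ∧
      t = ∑ i, u i * v i} c)
    (y : ℕ → Fin n → ℝ) (ys : Fin n → ℝ) (K : ℕ)
    (hiter : ∀ k, K ≤ k → y (k+1) - ys = (errMat A xs).mulVec (y k - ys))
    (hproj : ∀ v : Fin n → ℝ, (∃ z : Fin m → ℝ, v = Aᵀ.mulVec z) →
      (∀ i, xs i ≠ 0 → v i = 0) → (∑ i, (y K i - ys i) * v i) = 0) :
    ∀ k, K < k →
      Real.sqrt (∑ i, (y k i - ys i) ^ 2)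
        ≤ c ^ (k - K) * Real.sqrt (∑ i, (y K i - ys i) ^ 2) :=
  stmt10_general A hrank xs c hc y ys K hiter hproj
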